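/- Let H be a symmetric n×n real matrix with smallest eigenvalue Λ attained at unit eigenvector V = e_m (in an eigenbasis of H with eigenvalues λ_k), and let R be a curvature-type array with R_{mkmk} ≥ 0 for all k. Then the quantity (R_{ik}H_{jk} + R_{jk}H_{ik} − 2R_{ikjl}H_{kl})V^iV^j = 2Σ_k R_{mkmk}(Λ − λ_k) ≤ 0, where R_{ij} = Σ_k R_{ikjk}. -/

import Mathlib

open Finset Matrix

section

variable {ι α : Type*} [Fintype ι]

theorem two_mul_sum_mul_sub_nonpos [CommRing α] [PartialOrder α] [IsOrderedRing α]
    (K d : ι → α) (m : ι) (hK : ∀ k, 0 ≤ K k) (hmin : ∀ k, d m ≤ d k) :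
    2 * ∑ k, K k * (d m - d k) ≤ 0 :=
  mul_nonpos_of_nonneg_of_nonpos zero_le_two <| sum_nonpos fun k _ =>
    mul_nonpos_of_nonneg_of_nonpos (hK k) (sub_nonpos.2 (hmin k))

variable [DecidableEq ι]

theorem sum_sum_mul_ite_eq_mul_ite_eq [CommSemiring α] (f : ι → ι → α) (m : ι) :
    ∑ i, ∑ j, f i j * (if i = m then 1 else 0) * (if j = m then 1 else 0) = f m m := by
  simp only [mul_ite, mul_one, mul_zero, sum_ite_eq', mem_univ, if_true]

theorem sum_mul_diagonal_apply [CommSemiring α] (a d : ι → α) (j : ι) :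
    ∑ k, a k * diagonal d j k = a j * d j := by
  simp only [diagonal_apply, mul_ite, mul_zero, sum_ite_eq, mem_univ, if_true]

theorem sum_sum_mul_diagonal_apply [CommSemiring α] (B : ι → ι → α) (d : ι → α) :
    ∑ k, ∑ l, B k l * diagonal d k l = ∑ k, B k k * d k := by
  simp only [diagonal_apply, mul_ite, mul_zero, sum_ite_eq, mem_univ, if_true]

theorem ricci_sub_curvature_diagonal [CommRing α] (R : ι → ι → ι → ι → α) (d : ι → α) (m : ι) :
    (∑ k, (∑ l, R m l k l) * diagonal d m k) + (∑ k, (∑ l, R m l k l) * diagonal d m k)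
        - 2 * ∑ k, ∑ l, R m k m l * diagonal d k l
      = 2 * ∑ k, R m k m k * (d m - d k) := by
  rw [sum_mul_diagonal_apply, sum_sum_mul_diagonal_apply]
  simp only [mul_sub, sum_sub_distrib, ← sum_mul]
  ring

end

theorem stmt7_general (n : ℕ) (R : Fin n → Fin n → Fin n → Fin n → ℝ)
    (lam : Fin n → ℝ) (m : Fin n) (hmin : ∀ k, lam m ≤ lam k)
    (H : Matrix (Fin n) (Fin n) ℝ) (hH : H = Matrix.diagonal lam)
    (hsec : ∀ k, 0 ≤ R m k m k)
    (V : Fin n → ℝ) (hV : V = fun i => if i = m then 1 else 0) :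
    (∑ i, ∑ j, ((∑ k, (∑ l, R i l k l) * H j k) + (∑ k, (∑ l, R j l k l) * H i k)
        - 2 * ∑ k, ∑ l, R i k j l * H k l) * V i * V j)
      = 2 * ∑ k, R m k m k * (lam m - lam k) ∧
    2 * ∑ k, R m k m k * (lam m - lam k) ≤ 0 := by
  subst hH hV
  rw [sum_sum_mul_ite_eq_mul_ite_eq, ricci_sub_curvature_diagonal]
  exact ⟨rfl, two_mul_sum_mul_sub_nonpos _ lam m hsec hmin⟩

/-- Let `H` be diagonal in an orthonormal eigenbasis with eigenvalues `λ_k`, smallest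
eigenvalue `Λ = λ_m` attained at `V = e_m`, and let `R` be a curvature-type array with
`R_{mkmk} ≥ 0`.  Then
`(R_{ik}H_{jk} + R_{jk}H_{ik} − 2R_{ikjl}H_{kl}) V^i V^j = 2 Σ_k R_{mkmk}(Λ − λ_k) ≤ 0`,
where `R_{ij} = Σ_k R_{ikjk}`. -/
theorem stmt7 (n : ℕ) (R : Fin n → Fin n → Fin n → Fin n → ℝ)
    (hanti1 : ∀ i j k l, R i j k l = - R j i k l)
    (hanti2 : ∀ i j k l, R i j k l = - R i j l k)
    (hpair : ∀ i j k l, R i j k l = R k l i j)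
    (lam : Fin n → ℝ) (m : Fin n) (hmin : ∀ k, lam m ≤ lam k)
    (H : Matrix (Fin n) (Fin n) ℝ) (hH : H = Matrix.diagonal lam)
    (hsec : ∀ k, 0 ≤ R m k m k)
    (V : Fin n → ℝ) (hV : V = fun i => if i = m then 1 else 0) :
    (∑ i, ∑ j, ((∑ k, (∑ l, R i l k l) * H j k) + (∑ k, (∑ l, R j l k l) * H i k)
        - 2 * ∑ k, ∑ l, R i k j l * H k l) * V i * V j)
      = 2 * ∑ k, R m k m k * (lam m - lam k) ∧
    2 * ∑ k, R m k m k * (lam m - lam k) ≤ 0 :=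
  stmt7_general n R lam m hmin H hH hsec V hV
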